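/- For every u ∈ S^d with u ≠ (4), the successor s(u) of u in the lexicographic order ⪯ on S^d satisfies |l(u) − l(s(u))| ≤ 1, where l denotes the length of the tuple. -/

import Mathlib

open SimpleGraph

/-- Sorted list of the tuple set `S^d`: tuples with entries in {1,3} except
the last entry which is in {1,2,3,4}, of length between 1 and `d`,
listed in lexicographic order. -/
def Tl : ℕ → List (List ℕ)
  | 0 => []
  | k+1 => [[1]] ++ (Tl k).map (fun a => 1 :: a) ++ [[2], [3]]
            ++ (Tl k).map (fun a => 3 :: a) ++ [[4]]

/-- Strict lexicographic order on tuples (a proper prefix is smaller). -/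
def lexLt (a b : List ℕ) : Prop := List.Lex (· < ·) a b

def lexLe (a b : List ℕ) : Prop := a = b ∨ lexLt a b

/-- `v` is the successor of `u` in the lexicographic order on `S^d`. -/
def IsSucc (d : ℕ) (u v : List ℕ) : Prop :=
  v ∈ Tl d ∧ lexLt u v ∧ ∀ w ∈ Tl d, lexLt u w → lexLe v w

/-- The interval `[a,b]` in `S^d`. -/
def interval (d : ℕ) (a b : List ℕ) : Set (List ℕ) :=
  {c | c ∈ Tl d ∧ lexLe a c ∧ lexLe c b}

/-- `[a,b]` is a proper interval: no interior element has length `l(a)` or `l(b)`. -/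
def ProperInterval (d : ℕ) (a b : List ℕ) : Prop :=
  a ∈ Tl d ∧ b ∈ Tl d ∧ lexLe a b ∧
  ∀ c ∈ interval d a b, c ≠ a → c ≠ b →
    c.length ≠ a.length ∧ c.length ≠ b.length

/-- The set of left endpoints of flat steps of the interval `[a,b]`. -/
def flatSteps (d : ℕ) (a b : List ℕ) : Set (List ℕ) :=
  {c | c ∈ Tl d ∧ lexLe a c ∧ lexLt c b ∧ ∃ v, IsSucc d c v ∧ v.length = c.length}

/-- Vertices of `G_d`: elements of `S^d`, subdivision vertices, and centers. -/
inductive Vtx where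
  | elt : List ℕ → Vtx
  | sub : ℕ → Fin 2 → Vtx
  | ctr : ℕ → Vtx
deriving DecidableEq

/-- The path `P_d` as a list of vertices: the elements of `S^d` in order,
with two subdivision vertices between consecutive elements of equal length
and one otherwise. -/
def pathList (d : ℕ) : List Vtx :=
  ((Tl d).zipIdx.map (fun q => (q.2, q.1))).flatMap (fun p =>
    Vtx.elt p.2 :: (match (Tl d)[p.1 + 1]? with
      | none => []
      | some b =>
        if p.2.length = b.length then [Vtx.sub p.1 0, Vtx.sub p.1 1]
        else [Vtx.sub p.1 0]))

/-- `x` and `y` are consecutive in the list `l`. -/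
def ChainAdj {α : Type} (l : List α) (x y : α) : Prop :=
  ∃ i, (l[i]? = some x ∧ l[i+1]? = some y) ∨
       (l[i]? = some y ∧ l[i+1]? = some x)

/-- Adjacency from a center vertex. -/
def ctrAdj (d : ℕ) : Vtx → Vtx → Prop
  | Vtx.ctr k, Vtx.ctr m => k ≠ m ∧ 1 ≤ k ∧ k ≤ d ∧ 1 ≤ m ∧ m ≤ d
  | Vtx.ctr k, Vtx.elt a => 1 ≤ k ∧ k ≤ d ∧ a ∈ Tl d ∧ a.length = k
  | _, _ => False

/-- The vertex set of `G_d`. -/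
def VSet (d : ℕ) : Finset Vtx :=
  (pathList d).toFinset ∪ (Finset.Icc 1 d).image Vtx.ctr

def GdAdj (d : ℕ) (x y : Vtx) : Prop :=
  x ≠ y ∧ (ChainAdj (pathList d) x y ∨ ctrAdj d x y ∨ ctrAdj d y x)

/-- The graph `G_d`. -/
def Gd (d : ℕ) : SimpleGraph {x // x ∈ VSet d} where
  Adj x y := GdAdj d x.1 y.1
  symm := by
    constructor
    rintro x y ⟨hne, h⟩
    refine ⟨hne.symm, ?_⟩
    rcases h with ⟨i, hi⟩ | h | h
    · exact Or.inl ⟨i, hi.symm⟩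
    · exact Or.inr (Or.inr h)
    · exact Or.inr (Or.inl h)
  loopless := ⟨fun x h => h.1 rfl⟩

/-- A rank decomposition of a graph `G`: a finite cubic tree together with a
bijection from the vertices of `G` to the leaves of the tree. -/
structure RankDecomp {V : Type} [Fintype V] (G : SimpleGraph V) where
  t : Type
  fin : Fintype t
  tree : SimpleGraph t
  conn : tree.Connected
  acyc : tree.IsAcyclic
  two_le : 2 ≤ Nat.card t
  cubic : ∀ v : t, (tree.neighborSet v).ncard = 1 ∨ (tree.neighborSet v).ncard = 3
  leafEquiv : V ≃ {v : t // (tree.neighborSet v).ncard = 1}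

/-- The set of vertices of `G` whose leaf lies on the side of `a` of
the edge `ab` of the decomposition tree. -/
def RankDecomp.side {V : Type} [Fintype V] {G : SimpleGraph V}
    (D : RankDecomp G) (a b : D.t) : Set V :=
  {x | (D.tree.deleteEdges {s(a, b)}).Reachable (D.leafEquiv x).1 a}

/-- The cutrank function of `G`: the GF(2)-rank of the adjacency submatrix
between `X` and its complement. -/
noncomputable def cutRank {V : Type} [Fintype V] (G : SimpleGraph V) (X : Set V) : ℕ :=
  haveI : Fintype ↥X := Fintype.ofFinite _
  haveI : Fintype ↥(Xᶜ) := Fintype.ofFinite _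
  haveI : DecidableRel G.Adj := Classical.decRel _
  Matrix.rank (Matrix.of (fun (x : ↥X) (y : ↥(Xᶜ)) =>
    if G.Adj x.1 y.1 then (1 : ZMod 2) else 0))

/-- The decomposition `D` has width at most `k`. -/
def RankDecomp.WidthLE {V : Type} [Fintype V] {G : SimpleGraph V}
    (D : RankDecomp G) (k : ℕ) : Prop :=
  ∀ a b : D.t, D.tree.Adj a b → cutRank G (D.side a b) ≤ k

/-- The rank-width of `G`. -/
noncomputable def rankwidth {V : Type} [Fintype V] (G : SimpleGraph V) : ℕ :=
  sInf {k | ∃ D : RankDecomp G, D.WidthLE k}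

/-- `l` is an induced path in `G`: its vertices are distinct and two of them
are adjacent in `G` iff they are consecutive on `l`. -/
def IsInducedPathList {V : Type} (G : SimpleGraph V) (l : List V) : Prop :=
  l.Nodup ∧ ∀ x ∈ l, ∀ y ∈ l, (G.Adj x y ↔ ChainAdj l x y)

/-- The diamond: the complete graph on four vertices minus an edge. -/
def diamond : SimpleGraph (Fin 4) := (⊤ : SimpleGraph (Fin 4)).deleteEdges {s(2, 3)}

/-! The list `Tl (d + 1)` is `(1), 1·Tl d, (2), (3), 3·Tl d, (4)`, and `Tl d` runs from `(1)` to
`(4)`, so the junctions of the blocks are the steps `(1) → (1,1)`, `(1,4) → (2)`, `(2) → (3)`,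
`(3) → (3,1)` and `(3,4) → (4)`. Each is lexicographically increasing and changes the length by at
most one, and prefixing a letter preserves both properties; by induction, so does every step of
`Tl d`. Hence `Tl d` is sorted, the successor of `u = (Tl d)[i]` is `(Tl d)[i + 1]`, and the
two lengths differ by at most one. -/

theorem lexLe_iff_le {a b : List ℕ} : lexLe a b ↔ a ≤ b :=
  le_iff_eq_or_lt.symm

theorem List.SortedLT.eq_getElem_succ_of_isLeast {α : Type*} [LinearOrder α] {l : List α}
    (hl : l.SortedLT) {i : ℕ} (hi : i + 1 < l.length) {v : α}
    (hv : IsLeast {w | w ∈ l ∧ l[i] < w} v) : v = l[i + 1] := by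
  obtain ⟨⟨hvl, hiv⟩, hmin⟩ := hv
  obtain ⟨j, hj, rfl⟩ := List.getElem_of_mem hvl
  have hij : i < j := hl.getElem_lt_getElem_iff.1 hiv
  have hji : j ≤ i + 1 := hl.getElem_le_getElem_iff.1 <|
    hmin ⟨List.getElem_mem hi, hl.getElem_lt_getElem_iff.2 (Nat.lt_succ_self i)⟩
  obtain rfl : j = i + 1 := by omega
  rfl

theorem head?_Tl_succ (d : ℕ) : (Tl (d + 1)).head? = some [1] := rfl

theorem getLast?_Tl_succ (d : ℕ) : (Tl (d + 1)).getLast? = some [4] := by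
  rw [Tl, List.getLast?_append]
  rfl

theorem isChain_Tl {R : List ℕ → List ℕ → Prop} (hcons : ∀ c a b, R a b → R (c :: a) (c :: b))
    (h12 : R [1] [2]) (h23 : R [2] [3]) (h34 : R [3] [4]) (h11 : R [1] [1, 1])
    (h142 : R [1, 4] [2]) (h331 : R [3] [3, 1]) (h344 : R [3, 4] [4]) :
    ∀ d, (Tl d).IsChain R
  | 0 => List.IsChain.nil
  | 1 => by simp [Tl, h12, h23, h34]
  | d + 2 => by
    have ih := isChain_Tl hcons h12 h23 h34 h11 h142 h331 h344 (d + 1)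
    have hmap : ∀ c, ((Tl (d + 1)).map (c :: ·)).IsChain R :=
      fun c => List.isChain_map _ |>.2 (ih.imp fun a b => hcons c a b)
    rw [Tl]
    refine ((((List.isChain_singleton _).append (hmap 1) ?_).append
      (List.isChain_pair.2 h23) ?_).append (hmap 3) ?_).append (List.isChain_singleton _) ?_ <;>
      simp [List.getLast?_cons, List.getLast?_append, List.getLast?_map, head?_Tl_succ,
        getLast?_Tl_succ, h11, h142, h331, h344]

theorem isChain_Tl_length (d : ℕ) :
    (Tl d).IsChain fun a b => a.length ≤ b.length + 1 ∧ b.length ≤ a.length + 1 := by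
  apply isChain_Tl <;> simp

theorem sortedLT_Tl (d : ℕ) : (Tl d).SortedLT := by
  apply List.IsChain.sortedLT
  apply isChain_Tl <;> first | decide | simp

/-- For `u ∈ S^d` with `u ≠ (4)`, the successor `s(u)` satisfies
`|l(u) - l(s(u))| ≤ 1`. -/
theorem stmt5 (d : ℕ) (u v : List ℕ) (hu : u ∈ Tl d) (hne : u ≠ [4])
    (hs : IsSucc d u v) :
    u.length ≤ v.length + 1 ∧ v.length ≤ u.length + 1 := by
  obtain ⟨hv, huv, hmin⟩ := hs
  obtain ⟨d, rfl⟩ : ∃ d', d = d' + 1 :=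
    Nat.exists_eq_succ_of_ne_zero (by rintro rfl; simp [Tl] at hu)
  obtain ⟨i, hi, rfl⟩ := List.getElem_of_mem hu
  have hi1 : i + 1 < (Tl (d + 1)).length := by
    by_contra! h
    obtain rfl : i = (Tl (d + 1)).length - 1 := by omega
    exact hne (by simpa [List.getLast?_eq_getElem?, hi] using getLast?_Tl_succ d)
  obtain rfl : v = (Tl (d + 1))[i + 1] := (sortedLT_Tl (d + 1)).eq_getElem_succ_of_isLeast hi1
    ⟨⟨hv, huv⟩, fun w hw => lexLe_iff_le.1 (hmin w hw.1 hw.2)⟩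
  exact List.isChain_iff_getElem.1 (isChain_Tl_length (d + 1)) i hi1
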